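/- arXiv:1001.0176 — 3 statements merged into one kernel-verified Lean document; each statement's English description precedes it below -/
import Mathlib

section
/- The Schur multiplier of the 3-dimensional Heisenberg Lie algebra H(1) has dimension 2. -/
open Module

instance Prod.instLieRingBracket (L M : Type*) [LieRing L] [LieRing M] :
    Bracket (L × M) (L × M) :=
  ⟨fun x y => (⁅x.1, y.1⁆, ⁅x.2, y.2⁆)⟩

/-- Direct sum (product) of two Lie rings. -/
instance Prod.instLieRing (L M : Type*) [LieRing L] [LieRing M] : LieRing (L × M) where
  add_lie x y z := by ext <;> simp [Bracket.bracket, add_lie]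
  lie_add x y z := by ext <;> simp [Bracket.bracket, lie_add]
  lie_self x := by ext <;> simp [Bracket.bracket]
  leibniz_lie x y z := by ext <;> simp [Bracket.bracket]

instance Prod.instLieAlgebra (k L M : Type*) [CommRing k] [LieRing L] [LieRing M]
    [LieAlgebra k L] [LieAlgebra k M] : LieAlgebra k (L × M) where
  lie_smul t x y := by ext <;> simp [Bracket.bracket, lie_smul]

section Schur
variable (k : Type*) [Field k] (L : Type*) [LieRing L] [LieAlgebra k L]

/-- The canonical free presentation map `FreeLieAlgebra k L → L`. -/
noncomputable def presPi : FreeLieAlgebra k L →ₗ⁅k⁆ L := FreeLieAlgebra.lift k id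

/-- `R ∩ F²` for the canonical free presentation `0 → R → F → L → 0`. -/
noncomputable def multNum : LieIdeal k (FreeLieAlgebra k L) :=
  (presPi k L).ker ⊓ ⁅(⊤ : LieIdeal k (FreeLieAlgebra k L)), (⊤ : LieIdeal k (FreeLieAlgebra k L))⁆

/-- `[R, F]` for the canonical free presentation. -/
noncomputable def multDen : LieIdeal k (FreeLieAlgebra k L) :=
  ⁅(presPi k L).ker, (⊤ : LieIdeal k (FreeLieAlgebra k L))⁆

/-- The Schur multiplier `M(L) = (R ∩ F²)/[R,F]`, as a Lie algebra (it is abelian). -/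
noncomputable def schurMultiplier :=
  (↥(multNum k L)) ⧸ (LieIdeal.comap ((multNum k L) : LieSubalgebra k (FreeLieAlgebra k L)).incl
    (multDen k L))

noncomputable instance : LieRing (schurMultiplier k L) := by unfold schurMultiplier; infer_instance
noncomputable instance : LieAlgebra k (schurMultiplier k L) := by
  unfold schurMultiplier; infer_instance
noncomputable instance : Module k (schurMultiplier k L) := by
  unfold schurMultiplier; infer_instance

/-- dim M(L). -/
noncomputable def schurMultDim : ℕ := Module.finrank k (schurMultiplier k L)

/-- The derived subalgebra `L² = [L,L]` as an ideal. -/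
noncomputable def derivedIdeal : LieIdeal k L := ⁅(⊤ : LieIdeal k L), (⊤ : LieIdeal k L)⁆

end Schur


/-!
Write `F` for the free Lie algebra on `L`, `π : F → L` for the presentation and `R = ker π`.
Modulo `[R, F]` a bracket `⁅f, g⁆` only depends on `π f` and `π g`, so it is congruent to the
bracket of the lifts of `π f` and `π g` along a linear section of `π`. For a Heisenberg basis
`e₀, e₁, e₂ = ⁅e₀, e₁⁆` with generators `Xᵢ = of eᵢ` this makes every element of `F²` congruent
to a combination of `⁅X₀, X₁⁆`, `⁅X₀, X₂⁆`, `⁅X₁, X₂⁆`, and for elements of `R ∩ F²` the first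
coefficient vanishes. Conversely, a 2-cocycle `c` with trivial coefficients gives a central
extension of `L` through which `π` factors; the resulting functional on `F` kills `[R, F]` and
sends `⁅f, g⁆` to `c (π f) (π g)`. The cocycles `e₀* ∧ e₂*` and `e₁* ∧ e₂*` separate `⁅X₀, X₂⁆`
and `⁅X₁, X₂⁆`, so `M(L) ≅ k²`.
-/

open LieAlgebra LieModule.Cohomology

section SchurMultiplier

variable {k : Type*} [Field k] {L : Type*} [LieRing L] [LieAlgebra k L]

@[simp]
lemma presPi_of (u : L) : presPi k L (FreeLieAlgebra.of k u) = u :=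
  FreeLieAlgebra.lift_of_apply id u

lemma lie_sub_lie_section_mem_multDen (σ : L → FreeLieAlgebra k L)
    (hσ : ∀ u, presPi k L (σ u) = u) (f g : FreeLieAlgebra k L) :
    ⁅f, g⁆ - ⁅σ (presPi k L f), σ (presPi k L g)⁆ ∈ multDen k L := by
  set f' := σ (presPi k L f)
  set g' := σ (presPi k L g)
  have sub_mem_ker (h : FreeLieAlgebra k L) : h - σ (presPi k L h) ∈ (presPi k L).ker := by
    simp [hσ]
  have hsplit : ⁅f, g⁆ - ⁅f', g'⁆ = ⁅f - f', g⁆ - ⁅g - g', f'⁆ := by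
    rw [sub_lie, sub_lie, ← lie_skew g f', ← lie_skew g' f']
    abel
  rw [hsplit]
  exact sub_mem (LieSubmodule.lie_mem_lie (sub_mem_ker f) trivial)
    (LieSubmodule.lie_mem_lie (sub_mem_ker g) trivial)

lemma sub_mem_multDen_of_mem_multNum (ρ : FreeLieAlgebra k L →ₗ[k] FreeLieAlgebra k L)
    (hρ : ∀ f g : FreeLieAlgebra k L, ⁅f, g⁆ - ρ ⁅f, g⁆ ∈ multDen k L) {w : FreeLieAlgebra k L}
    (hw : w ∈ multNum k L) : w - ρ w ∈ multDen k L := by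
  have hw' := hw.2
  rw [SetLike.mem_coe, LieSubmodule.lieIdeal_oper_eq_linear_span] at hw'
  refine Submodule.span_le (p := (multDen k L : Submodule k _).comap (LinearMap.id - ρ)) |>.2 ?_ hw'
  rintro _ ⟨f, g, rfl⟩
  exact hρ f g

lemma schurMultDim_eq_finrank {V : Type*} [AddCommGroup V] [Module k V]
    (ψ : FreeLieAlgebra k L →ₗ[k] V) (hψ : ∀ v, ∃ w ∈ multNum k L, ψ w = v)
    (hker : ∀ w ∈ multNum k L, ψ w = 0 ↔ w ∈ multDen k L) :
    schurMultDim k L = finrank k V := by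
  set ψ' := ψ ∘ₗ (multNum k L : Submodule k (FreeLieAlgebra k L)).subtype
  have hsurj : Function.Surjective ψ' := fun v => by
    obtain ⟨w, hw, rfl⟩ := hψ v
    exact ⟨⟨w, hw⟩, rfl⟩
  have hker' : LinearMap.ker ψ' = (LieIdeal.comap
      ((multNum k L) : LieSubalgebra k (FreeLieAlgebra k L)).incl (multDen k L)).toSubmodule := by
    ext ⟨w, hw⟩
    exact hker w hw
  exact ((Submodule.quotEquivOfEq _ _ hker'.symm).trans
    (ψ'.quotKerEquivOfSurjective hsurj)).finrank_eq

noncomputable def basisSection {ι : Type*} (e : Basis ι k L) : L →ₗ[k] FreeLieAlgebra k L :=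
  e.constr k fun i => FreeLieAlgebra.of k (e i)

@[simp]
lemma presPi_basisSection {ι : Type*} (e : Basis ι k L) (u : L) :
    presPi k L (basisSection e u) = u := by
  have hcomp : (presPi k L : FreeLieAlgebra k L →ₗ[k] L) ∘ₗ basisSection e = LinearMap.id :=
    e.ext fun i => by simp [basisSection]
  exact LinearMap.congr_fun hcomp u

end SchurMultiplier

section TwoCocycle

variable {k : Type*} [Field k] {L : Type*} [LieRing L] [LieAlgebra k L]

section Functional

variable {M : Type*} [AddCommGroup M] [Module k M] (c : twoCocycle k L (TrivialLieModule k L M))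

def ofTwoCocycleProj : ofTwoCocycle c →ₗ⁅k⁆ L where
  toFun x := ((ofProd c).symm x).1
  map_add' _ _ := rfl
  map_smul' _ _ := rfl
  map_lie' := rfl

noncomputable def freeLiftOfTwoCocycle : FreeLieAlgebra k L →ₗ⁅k⁆ ofTwoCocycle c :=
  FreeLieAlgebra.lift k fun u => ofProd c (u, 0)

lemma fst_freeLiftOfTwoCocycle (f : FreeLieAlgebra k L) :
    ((ofProd c).symm (freeLiftOfTwoCocycle c f)).1 = presPi k L f := by
  have hcomp : (ofTwoCocycleProj c).comp (freeLiftOfTwoCocycle c) = presPi k L :=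
    FreeLieAlgebra.hom_ext fun u => by simp [freeLiftOfTwoCocycle]; rfl
  exact LieHom.congr_fun hcomp f

noncomputable def cocycleFunctional : FreeLieAlgebra k L →ₗ[k] M where
  toFun f := TrivialLieModule.equiv k L M ((ofProd c).symm (freeLiftOfTwoCocycle c f)).2
  map_add' _ _ := by simp
  map_smul' _ _ := by simp

lemma cocycleFunctional_lie (f g : FreeLieAlgebra k L) :
    cocycleFunctional c ⁅f, g⁆ =
      TrivialLieModule.equiv k L M (c.1 (presPi k L f) (presPi k L g)) := by
  simp [cocycleFunctional, bracket_ofTwoCocycle, fst_freeLiftOfTwoCocycle, trivial_lie_zero]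

lemma cocycleFunctional_eq_zero_of_mem_multDen {w : FreeLieAlgebra k L}
    (hw : w ∈ multDen k L) : cocycleFunctional c w = 0 := by
  rw [← LieSubmodule.mem_toSubmodule, multDen, LieSubmodule.lieIdeal_oper_eq_linear_span] at hw
  refine Submodule.span_le (p := LinearMap.ker (cocycleFunctional c)) |>.2 ?_ hw
  rintro _ ⟨⟨r, hr⟩, f, rfl⟩
  simp [cocycleFunctional_lie, (LieHom.mem_ker).1 hr]

end Functional

def wedge (α γ : L →ₗ[k] k) : L →ₗ[k] L →ₗ[k] k :=
  (LinearMap.mul k k).compl₁₂ α γ - (LinearMap.mul k k).compl₁₂ γ α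

@[simp]
lemma wedge_apply (α γ : L →ₗ[k] k) (p q : L) : wedge α γ p q = α p * γ q - γ p * α q := rfl

-- `hα` and `hγ` say `dα = 0` and `dγ = -α ∧ β`, so `d(α ∧ γ) = -α ∧ dγ = α ∧ α ∧ β = 0`.
def wedgeCocycle (α β γ : L →ₗ[k] k) (hα : ∀ p q : L, α ⁅p, q⁆ = 0)
    (hγ : ∀ p q : L, γ ⁅p, q⁆ = α p * β q - α q * β p) :
    twoCocycle k L (TrivialLieModule k L k) where
  val := ⟨(wedge α γ).compr₂ (TrivialLieModule.equiv k L k).symm.toLinearMap, fun p => by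
    show (TrivialLieModule.equiv k L k).symm (wedge α γ p p) = 0
    rw [wedge_apply, mul_comm, sub_self, map_zero]⟩
  property := by
    rw [mem_twoCocycle_iff_of_trivial]
    intro p q r
    refine (congrArg (TrivialLieModule.equiv k L k).symm ?_).trans (map_add _ _ _)
    simp only [wedge_apply, hα, hγ]
    ring

@[simp]
lemma wedgeCocycle_apply (α β γ : L →ₗ[k] k) (hα hγ) (p q : L) :
    (wedgeCocycle α β γ hα hγ).1 p q = (TrivialLieModule.equiv k L k).symm (wedge α γ p q) :=
  rfl

end TwoCocycle

section Heisenberg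

variable {k : Type*} [Field k] {L : Type*} [LieRing L] [LieAlgebra k L]

structure IsHeisenbergBasis (e : Basis (Fin 3) k L) : Prop where
  lie_zero_one : ⁅e 0, e 1⁆ = e 2
  lie_two : ∀ u : L, ⁅u, e 2⁆ = 0

namespace IsHeisenbergBasis

open FreeLieAlgebra

variable {e : Basis (Fin 3) k L}

lemma lie_eq (he : IsHeisenbergBasis e) (u v : L) :
    ⁅u, v⁆ = (e.coord 0 u * e.coord 1 v - e.coord 0 v * e.coord 1 u) • e 2 := by
  have h10 : ⁅e 1, e 0⁆ = -e 2 := by rw [← lie_skew, he.lie_zero_one]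
  have h2 (w : L) : ⁅e 2, w⁆ = 0 := by rw [← lie_skew, he.lie_two, neg_zero]
  conv_lhs => rw [← e.sum_repr u, ← e.sum_repr v]
  simp only [Fin.sum_univ_three, lie_add, add_lie, lie_smul, smul_lie, lie_self, h10, h2,
    he.lie_zero_one, he.lie_two, smul_zero, smul_neg, add_zero, zero_add, Basis.coord_apply]
  module

lemma coord_lie (he : IsHeisenbergBasis e) (i : Fin 3) (u v : L) :
    e.coord i ⁅u, v⁆ =
      if i = 2 then e.coord 0 u * e.coord 1 v - e.coord 0 v * e.coord 1 u else 0 := by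
  rw [he.lie_eq, map_smul]
  fin_cases i <;> simp

lemma lie_basisSection (he : IsHeisenbergBasis e) (u v : L) :
    ⁅basisSection e u, basisSection e v⁆ =
      e.coord 2 ⁅u, v⁆ • ⁅of k (e 0), of k (e 1)⁆ +
        wedge (e.coord 0) (e.coord 2) u v • ⁅of k (e 0), of k (e 2)⁆ +
        wedge (e.coord 1) (e.coord 2) u v • ⁅of k (e 1), of k (e 2)⁆ := by
  have h10 : ⁅of k (e 1), of k (e 0)⁆ = -⁅of k (e 0), of k (e 1)⁆ := (lie_skew _ _).symm
  have h20 : ⁅of k (e 2), of k (e 0)⁆ = -⁅of k (e 0), of k (e 2)⁆ := (lie_skew _ _).symm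
  have h21 : ⁅of k (e 2), of k (e 1)⁆ = -⁅of k (e 1), of k (e 2)⁆ := (lie_skew _ _).symm
  simp only [basisSection, Basis.constr_apply_fintype, Fin.sum_univ_three, lie_add, add_lie,
    lie_smul, smul_lie, lie_self, h10, h20, h21, he.coord_lie, if_true, wedge_apply,
    Basis.equivFun_apply, Basis.coord_apply]
  module

lemma schurMultDim_eq_two (he : IsHeisenbergBasis e) : schurMultDim k L = 2 := by
  have hc (p q : L) : e.coord 2 ⁅p, q⁆ = e.coord 0 p * e.coord 1 q - e.coord 0 q * e.coord 1 p :=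
    he.coord_lie 2 p q
  have hc' (p q : L) :
      e.coord 2 ⁅p, q⁆ = e.coord 1 p * (-e.coord 0) q - e.coord 1 q * (-e.coord 0) p := by
    rw [hc, LinearMap.neg_apply, LinearMap.neg_apply]; ring
  set ψ₀ := cocycleFunctional (wedgeCocycle _ _ _ (he.coord_lie 0) hc)
  set ψ₁ := cocycleFunctional (wedgeCocycle _ _ _ (he.coord_lie 1) hc')
  -- `ρ` reads off the coordinates of a bracket modulo `[R, F]`
  set ρ : FreeLieAlgebra k L →ₗ[k] FreeLieAlgebra k L :=
    (e.coord 2 ∘ₗ (presPi k L : FreeLieAlgebra k L →ₗ[k] L)).smulRight ⁅of k (e 0), of k (e 1)⁆ +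
      ψ₀.smulRight ⁅of k (e 0), of k (e 2)⁆ + ψ₁.smulRight ⁅of k (e 1), of k (e 2)⁆
  have hρ (f g : FreeLieAlgebra k L) : ⁅f, g⁆ - ρ ⁅f, g⁆ ∈ multDen k L := by
    convert lie_sub_lie_section_mem_multDen _ (presPi_basisSection e) f g using 2
    simp [ρ, he.lie_basisSection, ψ₀, ψ₁, cocycleFunctional_lie]
  have hmem (i : Fin 3) : ⁅of k (e i), of k (e 2)⁆ ∈ multNum k L :=
    ⟨by simp [he.lie_two], LieSubmodule.lie_mem_lie trivial trivial⟩
  rw [schurMultDim_eq_finrank (ψ₀.prod ψ₁), finrank_prod, finrank_self]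
  · rintro ⟨β, γ⟩
    refine ⟨β • ⁅of k (e 0), of k (e 2)⁆ + γ • ⁅of k (e 1), of k (e 2)⁆,
      add_mem ((multNum k L).smul_mem _ (hmem 0)) ((multNum k L).smul_mem _ (hmem 1)), ?_⟩
    simp [ψ₀, ψ₁, cocycleFunctional_lie]
  · intro w hw
    refine ⟨fun h0 => ?_, fun hd => ?_⟩
    · have h₀ : ψ₀ w = 0 := congrArg Prod.fst h0
      have h₁ : ψ₁ w = 0 := congrArg Prod.snd h0
      simpa [ρ, (LieHom.mem_ker).1 hw.1, h₀, h₁] using sub_mem_multDen_of_mem_multNum ρ hρ hw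
    · exact Prod.ext (cocycleFunctional_eq_zero_of_mem_multDen _ hd)
        (cocycleFunctional_eq_zero_of_mem_multDen _ hd)

end IsHeisenbergBasis

lemma linearIndependent_lie_of_lie_ne_zero {x y : L} (hxy : ⁅x, y⁆ ≠ 0)
    (hcentral : ∀ u : L, ⁅u, ⁅x, y⁆⁆ = 0) : LinearIndependent k ![x, y, ⁅x, y⁆] := by
  rw [Fintype.linearIndependent_iff]
  intro g hg
  simp only [Fin.sum_univ_three, Matrix.cons_val_zero, Matrix.cons_val_one,
    Matrix.cons_val_two, Matrix.head_cons, Matrix.tail_cons] at hg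
  have h1 : g 1 = 0 := by
    simpa [hcentral, hxy] using congrArg (⁅x, ·⁆) hg
  have h0 : g 0 = 0 := by
    have hyx : ⁅y, x⁆ = -⁅x, y⁆ := (lie_skew y x).symm
    have := congrArg (⁅y, ·⁆) hg
    simp only [lie_add, lie_smul, lie_self, hcentral, hyx, smul_zero, add_zero, smul_neg] at this
    simpa [hxy] using this
  have h2 : g 2 = 0 := by
    simpa [h0, h1, hxy] using hg
  intro i
  fin_cases i <;> assumption

lemma exists_isHeisenbergBasis (hL3 : finrank k L = 3)
    (hLc : derivedIdeal k L = LieAlgebra.center k L) (hL1 : finrank k (derivedIdeal k L) = 1) :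
    ∃ e : Basis (Fin 3) k L, IsHeisenbergBasis e := by
  obtain ⟨x, y, hxy⟩ : ∃ x y : L, ⁅x, y⁆ ≠ 0 := by
    by_contra! h
    have hbot : derivedIdeal k L = ⊥ :=
      (LieSubmodule.lie_eq_bot_iff _ _).2 fun x _ y _ => h x y
    have hL1' : finrank k (derivedIdeal k L).toSubmodule = 1 := hL1
    rw [hbot] at hL1'
    simp at hL1'
  have hcentral (u : L) : ⁅u, ⁅x, y⁆⁆ = 0 := by
    have hmem : ⁅x, y⁆ ∈ LieAlgebra.center k L :=
      hLc ▸ LieSubmodule.lie_mem_lie (LieSubmodule.mem_top x) (LieSubmodule.mem_top y)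
    exact (LieModule.mem_maxTrivSubmodule k L L _).1 hmem u
  set e := basisOfLinearIndependentOfCardEqFinrank
    (linearIndependent_lie_of_lie_ne_zero (k := k) hxy hcentral) (by simp [hL3])
  refine ⟨e, ⟨?_, ?_⟩⟩ <;> simp [e, hcentral]

end Heisenberg

theorem stmt3_general (k : Type*) [Field k] (H : Type*) [LieRing H] [LieAlgebra k H]
    (hH3 : finrank k H = 3)
    (hHc : derivedIdeal k H = LieAlgebra.center k H)
    (hH1 : finrank k ↥(derivedIdeal k H) = 1) :
    schurMultDim k H = 2 := by
  obtain ⟨e, he⟩ := exists_isHeisenbergBasis hH3 hHc hH1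
  exact he.schurMultDim_eq_two

theorem stmt3 (k : Type*) [Field k] (H : Type*) [LieRing H] [LieAlgebra k H]
    [FiniteDimensional k H] (hH3 : finrank k H = 3)
    (hHc : derivedIdeal k H = LieAlgebra.center k H)
    (hH1 : finrank k ↥(derivedIdeal k H) = 1) :
    schurMultDim k H = 2 :=
  stmt3_general k H hH3 hHc hH1
end

section
/- For all m ≥ 2, the Schur multiplier of the Heisenberg Lie algebra H(m) of dimension 2m+1 has dimension 2m² − m − 1. -/
open Module

/-!
Let `T = F/[R,F]` be the free central extension of `L`. Since `R/[R,F]` is central in `T`, the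
bracket of `T` descends to an alternating bilinear map `β : L × L → T`, and the Schur multiplier
is `[T,T] ∩ R/[R,F]`, the kernel of the projection `[T,T] → L²`; hence
`dim M(L) = dim [T,T] - dim L²`.

Now let `L² = Z(L)` be one-dimensional and `dim L ≥ 4`. The centralizer of any `z` has
codimension at most one, so it is not abelian (an abelian one would lie in `kz + L²`): it contains
`x, y` with `[x,y] ≠ 0`. The Jacobi identity in `T` then gives `β(z, [x,y]) = 0`, i.e.
`β(z, L²) = 0`, and `β` factors through `⋀²(L/L²)`. Conversely, the central extension of `L` by
`⋀²(L/L²)` with cocycle `(x, y) ↦ x̄ ∧ ȳ` receives a map from `T`, since `F` is free and `R` maps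
to central elements; its `⋀²`-component is a left inverse of the factorization. So
`[T,T] ≅ ⋀²(L/L²)`, and for `H(m)` we get `dim M = (2m choose 2) - 1 = 2m² - m - 1`.
-/

lemma Matrix.update_vecCons_one {α : Type*} (x y z : α) :
    Function.update ![x, y] 1 z = ![x, z] := by
  ext i; fin_cases i <;> rfl

section FinTwo

variable {R M N : Type*} [CommRing R] [AddCommGroup M] [Module R M] [AddCommGroup N] [Module R N]

def LinearMap.toAlternatingMapFinTwo (B : M →ₗ[R] M →ₗ[R] N) (hB : ∀ x, B x x = 0) :
    M [⋀^Fin 2]→ₗ[R] N where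
  toFun v := B (v 0) (v 1)
  map_update_add' v i x y := by fin_cases i <;> simp
  map_update_smul' v i c x := by fin_cases i <;> simp
  map_eq_zero_of_eq' v i j hv hij := by fin_cases i <;> fin_cases j <;> simp_all

def AlternatingMap.toBilinFinTwo (f : M [⋀^Fin 2]→ₗ[R] N) : M →ₗ[R] M →ₗ[R] N :=
  LinearMap.mk₂ R (fun x y => f ![x, y])
    (fun x x' y => f.map_vecCons_add _ x x')
    (fun c x y => f.map_vecCons_smul _ c x)
    (fun x y y' => by simpa only [Matrix.update_vecCons_one] using f.map_update_add ![x, 0] 1 y y')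
    (fun c x y => by simpa only [Matrix.update_vecCons_one] using f.map_update_smul ![x, 0] 1 c y)

lemma AlternatingMap.toBilinFinTwo_self (f : M [⋀^Fin 2]→ₗ[R] N) (x : M) :
    f.toBilinFinTwo x x = 0 :=
  f.map_eq_zero_of_eq _ (i := 0) (j := 1) rfl (by decide)

end FinTwo

lemma Submodule.finrank_map_add_finrank_inf_ker {K V W : Type*} [Field K] [AddCommGroup V]
    [Module K V] [AddCommGroup W] [Module K W] (p : Submodule K V) [FiniteDimensional K p]
    (f : V →ₗ[K] W) : finrank K (p.map f) + finrank K ↥(p ⊓ LinearMap.ker f) = finrank K p := by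
  have h := LinearMap.finrank_range_add_finrank_ker (f.domRestrict p)
  rwa [LinearMap.range_domRestrict, LinearMap.ker_domRestrict, ← top_inf_eq (comap _ _),
    ← comap_subtype_self p, ← comap_inf,
    (comapSubtypeEquivOfLe (inf_le_left : p ⊓ LinearMap.ker f ≤ p)).finrank_eq] at h

open FreeLieAlgebra

lemma presPi_of_s4 {k L : Type*} [Field k] [LieRing L] [LieAlgebra k L] (x : L) :
    presPi k L (of k x) = x :=
  lift_of_apply _ _

abbrev FreeCentralExtension (k L : Type*) [Field k] [LieRing L] [LieAlgebra k L] :=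
  FreeLieAlgebra k L ⧸ multDen k L

namespace FreeCentralExtension

variable (k : Type*) [Field k] (L : Type*) [LieRing L] [LieAlgebra k L]

noncomputable def mk : FreeLieAlgebra k L →ₗ⁅k⁆ FreeCentralExtension k L :=
  { (multDen k L).toSubmodule.mkQ with
    map_lie' := LieSubmodule.Quotient.mk_bracket _ _ _ }

noncomputable def proj : FreeCentralExtension k L →ₗ[k] L :=
  (multDen k L).toSubmodule.liftQ (presPi k L) (by
    rw [multDen, LieSubmodule.lieIdeal_oper_eq_linear_span', Submodule.span_le]
    rintro _ ⟨r, hr, f, -, rfl⟩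
    simp [LieHom.mem_ker.1 hr])

noncomputable def derivedImage : Submodule k (FreeCentralExtension k L) :=
  (⁅(⊤ : LieIdeal k (FreeLieAlgebra k L)), ⊤⁆ : LieIdeal k (FreeLieAlgebra k L)).toSubmodule.map
    (mk k L : FreeLieAlgebra k L →ₗ[k] FreeCentralExtension k L)

variable {k L}

lemma mk_eq_zero_iff {a : FreeLieAlgebra k L} : mk k L a = 0 ↔ a ∈ multDen k L :=
  Submodule.Quotient.mk_eq_zero _

@[simp]
lemma proj_mk (a : FreeLieAlgebra k L) : proj k L (mk k L a) = presPi k L a := rfl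

lemma lie_mk_eq_zero_of_presPi_eq_zero {a : FreeLieAlgebra k L} (ha : presPi k L a = 0)
    (b : FreeLieAlgebra k L) : ⁅mk k L a, mk k L b⁆ = 0 := by
  rw [← LieHom.map_lie, mk_eq_zero_iff]
  exact LieSubmodule.lie_mem_lie (LieHom.mem_ker.2 ha) (LieSubmodule.mem_top b)

lemma lie_mk_congr {a a' b b' : FreeLieAlgebra k L} (ha : presPi k L a = presPi k L a')
    (hb : presPi k L b = presPi k L b') : ⁅mk k L a, mk k L b⁆ = ⁅mk k L a', mk k L b'⁆ := by
  have ha' : presPi k L (a - a') = 0 := by rw [map_sub, ha, sub_self]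
  have hb' : presPi k L (b - b') = 0 := by rw [map_sub, hb, sub_self]
  rw [← sub_eq_zero, ← sub_add_sub_cancel _ ⁅mk k L a', mk k L b⁆, ← sub_lie, ← lie_sub,
    ← map_sub, ← map_sub, lie_mk_eq_zero_of_presPi_eq_zero ha', ← lie_skew,
    lie_mk_eq_zero_of_presPi_eq_zero hb', neg_zero, zero_add]

variable (k L) in
noncomputable def liftBracket : L →ₗ[k] L →ₗ[k] FreeCentralExtension k L :=
  LinearMap.mk₂ k (fun x y => ⁅mk k L (of k x), mk k L (of k y)⁆)
    (fun x x' y => by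
      rw [← add_lie, ← map_add]; exact lie_mk_congr (by simp [presPi_of_s4]) rfl)
    (fun c x y => by
      rw [← smul_lie, ← map_smul]; exact lie_mk_congr (by simp [presPi_of_s4]) rfl)
    (fun x y y' => by
      rw [← lie_add, ← map_add]; exact lie_mk_congr rfl (by simp [presPi_of_s4]))
    (fun c x y => by
      rw [← lie_smul, ← map_smul]; exact lie_mk_congr rfl (by simp [presPi_of_s4]))

lemma liftBracket_apply (x y : L) :
    liftBracket k L x y = ⁅mk k L (of k x), mk k L (of k y)⁆ := rfl

lemma mk_lie (a b : FreeLieAlgebra k L) :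
    mk k L ⁅a, b⁆ = liftBracket k L (presPi k L a) (presPi k L b) := by
  rw [LieHom.map_lie]
  exact lie_mk_congr (presPi_of_s4 _).symm (presPi_of_s4 _).symm

lemma liftBracket_self (x : L) : liftBracket k L x x = 0 :=
  lie_self (mk k L (of k x))

lemma liftBracket_swap (x y : L) : liftBracket k L y x = -liftBracket k L x y := by
  rw [liftBracket_apply, liftBracket_apply, lie_skew]

lemma liftBracket_jacobi (x y z : L) :
    liftBracket k L x ⁅y, z⁆ + liftBracket k L y ⁅z, x⁆ + liftBracket k L z ⁅x, y⁆ = 0 := by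
  simpa only [map_add, map_zero, mk_lie, (presPi k L).map_lie, presPi_of_s4] using
    congrArg (mk k L) (lie_jacobi (of k x) (of k y) (of k z))

lemma proj_liftBracket (x y : L) : proj k L (liftBracket k L x y) = ⁅x, y⁆ := by
  rw [liftBracket_apply, ← LieHom.map_lie, proj_mk, LieHom.map_lie, presPi_of_s4, presPi_of_s4]

lemma derivedImage_eq_span :
    derivedImage k L = Submodule.span k {t | ∃ x y, liftBracket k L x y = t} := by
  apply le_antisymm
  · rw [derivedImage, Submodule.map_le_iff_le_comap, LieSubmodule.lieIdeal_oper_eq_linear_span',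
      Submodule.span_le]
    rintro _ ⟨a, -, b, -, rfl⟩
    exact Submodule.subset_span ⟨_, _, (mk_lie a b).symm⟩
  · rw [Submodule.span_le]
    rintro _ ⟨x, y, rfl⟩
    exact ⟨_, LieSubmodule.lie_mem_lie (LieSubmodule.mem_top _) (LieSubmodule.mem_top _), rfl⟩

lemma map_proj_derivedImage :
    (derivedImage k L).map (proj k L) = (derivedIdeal k L).toSubmodule := by
  rw [derivedImage_eq_span, Submodule.map_span, derivedIdeal,
    LieSubmodule.lieIdeal_oper_eq_linear_span']
  congr 1
  ext u
  simp [proj_liftBracket]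

lemma map_mk_multNum :
    (multNum k L).toSubmodule.map (mk k L : FreeLieAlgebra k L →ₗ[k] FreeCentralExtension k L) =
      derivedImage k L ⊓ LinearMap.ker (proj k L) := by
  apply le_antisymm
  · rintro _ ⟨a, ⟨haR, haF⟩, rfl⟩
    exact ⟨⟨a, haF, rfl⟩, LieHom.mem_ker.1 haR⟩
  · rintro _ ⟨⟨a, haF, rfl⟩, ha⟩
    exact ⟨a, ⟨LieHom.mem_ker.2 ha, haF⟩, rfl⟩

noncomputable def schurMultiplierEquiv :
    schurMultiplier k L ≃ₗ[k] ↥(derivedImage k L ⊓ LinearMap.ker (proj k L)) :=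
  let φ : (multNum k L : LieSubalgebra k (FreeLieAlgebra k L)) →ₗ[k] FreeCentralExtension k L :=
    (mk k L : FreeLieAlgebra k L →ₗ[k] FreeCentralExtension k L) ∘ₗ
      (multNum k L).toSubmodule.subtype
  have hker : (LieIdeal.comap (multNum k L : LieSubalgebra k (FreeLieAlgebra k L)).incl
      (multDen k L)).toSubmodule = LinearMap.ker φ := by
    ext a
    exact mk_eq_zero_iff.symm
  have hrange : LinearMap.range φ = derivedImage k L ⊓ LinearMap.ker (proj k L) := by
    rw [← map_mk_multNum, ← Submodule.range_subtype (multNum k L).toSubmodule,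
      ← LinearMap.range_comp]
    rfl
  (Submodule.quotEquivOfEq _ _ hker).trans (φ.quotKerEquivRange.trans (LinearEquiv.ofEq _ _ hrange))

lemma finrank_schurMultiplier_add_finrank_derivedIdeal [FiniteDimensional k (derivedImage k L)] :
    finrank k (schurMultiplier k L) + finrank k (derivedIdeal k L) =
      finrank k (derivedImage k L) := by
  rw [schurMultiplierEquiv.finrank_eq, add_comm,
    ← (derivedImage k L).finrank_map_add_finrank_inf_ker (proj k L), map_proj_derivedImage]
  rfl

open LieModule.Cohomology in
lemma exists_comp_liftBracket_eq {V : Type*} [AddCommGroup V] [Module k V]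
    (σ : L →ₗ[k] L →ₗ[k] V) (hσ : ∀ x, σ x x = 0)
    (hσ_cocycle : ∀ x y z, σ x ⁅y, z⁆ = σ ⁅x, y⁆ z + σ y ⁅x, z⁆) :
    ∃ θ : FreeCentralExtension k L →ₗ[k] V, ∀ x y, θ (liftBracket k L x y) = σ x y := by
  let σ' : twoCochain k L (TrivialLieModule k L V) := ⟨σ, hσ⟩
  let c : twoCocycle k L (TrivialLieModule k L V) :=
    ⟨σ', (mem_twoCocycle_iff_of_trivial k L (TrivialLieModule k L V) σ').2 hσ_cocycle⟩
  let ψ : FreeLieAlgebra k L →ₗ⁅k⁆ LieAlgebra.ofTwoCocycle c :=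
    lift k fun x => LieAlgebra.ofProd c (x, 0)
  let fst : LieAlgebra.ofTwoCocycle c →ₗ⁅k⁆ L :=
    { toFun := fun e => ((LieAlgebra.ofProd c).symm e).1
      map_add' := fun _ _ => rfl
      map_smul' := fun _ _ => rfl
      map_lie' := rfl }
  let snd : LieAlgebra.ofTwoCocycle c →ₗ[k] V :=
    { toFun := fun e => ((LieAlgebra.ofProd c).symm e).2
      map_add' := fun _ _ => rfl
      map_smul' := fun _ _ => rfl }
  have fst_comp_ψ : fst.comp ψ = presPi k L := by
    ext x
    simp only [LieHom.coe_comp, Function.comp_apply, lift_of_apply, presPi, id_eq, ψ]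
    rfl
  have lie_eq_zero : ∀ e e' : LieAlgebra.ofTwoCocycle c, fst e = 0 → ⁅e, e'⁆ = 0 := by
    intro e e' he
    change ((LieAlgebra.ofProd c).symm e).1 = 0 at he
    rw [LieAlgebra.bracket_ofTwoCocycle, he]
    simp only [zero_lie, map_zero, LinearMap.zero_apply, trivial_lie_zero, sub_self, add_zero]
    rfl
  have hψ :
      (multDen k L).toSubmodule ≤ LinearMap.ker (snd ∘ₗ (ψ : FreeLieAlgebra k L →ₗ[k] _)) := by
    rw [multDen, LieSubmodule.lieIdeal_oper_eq_linear_span', Submodule.span_le]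
    rintro _ ⟨r, hr, f, -, rfl⟩
    have hr' : fst (ψ r) = 0 := by rw [← LieHom.comp_apply, fst_comp_ψ]; exact hr
    simp [lie_eq_zero _ _ hr']
  refine ⟨(multDen k L).toSubmodule.liftQ _ hψ, fun x y => ?_⟩
  rw [liftBracket_apply, ← LieHom.map_lie]
  change snd (ψ ⁅of k x, of k y⁆) = _
  rw [LieHom.map_lie]
  simp only [ψ, lift_of_apply, LieAlgebra.bracket_ofTwoCocycle, Equiv.symm_apply_apply,
    twoCochain_val_apply, lie_zero, add_zero, sub_zero]
  rfl

section ExteriorSquare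

variable {φ : ⋀[k]^2 (L ⧸ (derivedIdeal k L).toSubmodule) →ₗ[k] FreeCentralExtension k L}
  (hφ : ∀ x y, φ (exteriorPower.ιMulti k 2 ![Submodule.Quotient.mk x, Submodule.Quotient.mk y]) =
    liftBracket k L x y)
include hφ

lemma range_eq_derivedImage_of_comp_ιMulti_eq_liftBracket :
    LinearMap.range φ = derivedImage k L := by
  rw [derivedImage_eq_span, LinearMap.range_eq_map, ← exteriorPower.ιMulti_span,
    Submodule.map_span]
  congr 1
  ext t
  constructor
  · rintro ⟨_, ⟨v, rfl⟩, rfl⟩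
    obtain ⟨x, hx⟩ := Submodule.mkQ_surjective _ (v 0)
    obtain ⟨y, hy⟩ := Submodule.mkQ_surjective _ (v 1)
    have hv : v = ![Submodule.Quotient.mk x, Submodule.Quotient.mk y] := by
      rw [← Submodule.mkQ_apply, ← Submodule.mkQ_apply, hx, hy]
      exact (FinVec.etaExpand_eq v).symm
    exact ⟨x, y, by rw [hv, hφ]⟩
  · rintro ⟨x, y, rfl⟩
    exact ⟨_, ⟨_, rfl⟩, hφ x y⟩

lemma injective_of_comp_ιMulti_eq_liftBracket : Function.Injective φ := by
  let q := (derivedIdeal k L).toSubmodule.mkQ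
  let ι := exteriorPower.ιMulti k 2 (M := L ⧸ (derivedIdeal k L).toSubmodule)
  have hq (x y : L) : q ⁅x, y⁆ = 0 := (Submodule.Quotient.mk_eq_zero _).2
    (LieSubmodule.lie_mem_lie (LieSubmodule.mem_top x) (LieSubmodule.mem_top y))
  obtain ⟨θ, hθ⟩ := exists_comp_liftBracket_eq (ι.toBilinFinTwo.compl₁₂ q q)
    (fun x => ι.toBilinFinTwo_self _)
    fun x y z => by
      simp only [LinearMap.compl₁₂_apply, hq, map_zero, LinearMap.zero_apply, add_zero]
  have hθφ (u w) : θ (φ (ι ![u, w])) = ι ![u, w] := by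
    induction u using Submodule.Quotient.induction_on
    induction w using Submodule.Quotient.induction_on
    rw [hφ, hθ]
    rfl
  refine Function.LeftInverse.injective (g := θ) fun t => ?_
  suffices θ ∘ₗ φ = LinearMap.id from LinearMap.congr_fun this t
  refine exteriorPower.linearMap_ext (AlternatingMap.ext fun v => ?_)
  rw [← FinVec.etaExpand_eq v]
  exact hθφ (v 0) (v 1)

end ExteriorSquare

end FreeCentralExtension
section HeisenbergType

variable {k : Type*} [Field k] {L : Type*} [LieRing L] [LieAlgebra k L]

lemma mem_derivedIdeal_iff_forall_lie_eq_zero (hc : derivedIdeal k L = LieAlgebra.center k L)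
    {x : L} : x ∈ derivedIdeal k L ↔ ∀ y : L, ⁅x, y⁆ = 0 := by
  rw [hc, LieModule.mem_maxTrivSubmodule]
  exact forall_congr' fun y => by rw [← lie_skew, neg_eq_zero]

lemma derivedIdeal_eq_span_lie (h1 : finrank k (derivedIdeal k L) = 1) {a b : L}
    (hab : ⁅a, b⁆ ≠ 0) : (derivedIdeal k L).toSubmodule = k ∙ ⁅a, b⁆ := by
  have hle : k ∙ ⁅a, b⁆ ≤ (derivedIdeal k L).toSubmodule :=
    (Submodule.span_singleton_le_iff_mem _ _).2
      (LieSubmodule.lie_mem_lie (LieSubmodule.mem_top a) (LieSubmodule.mem_top b))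
  have : FiniteDimensional k (derivedIdeal k L) := Module.finite_of_finrank_eq_succ h1
  refine (Submodule.eq_of_le_of_finrank_eq hle ?_).symm
  rw [finrank_span_singleton hab]
  exact h1.symm

lemma exists_lie_ne_zero (h1 : finrank k (derivedIdeal k L) = 1) : ∃ a b : L, ⁅a, b⁆ ≠ 0 := by
  by_contra! h
  have hbot : derivedIdeal k L = ⊥ :=
    (LieSubmodule.lie_eq_bot_iff _ _).2 fun a _ b _ => h a b
  have h1' : finrank k (derivedIdeal k L).toSubmodule = 1 := h1
  rw [hbot, LieSubmodule.bot_toSubmodule, finrank_bot] at h1'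
  exact zero_ne_one h1'

lemma ker_ad_le_span_sup_derivedIdeal (hc : derivedIdeal k L = LieAlgebra.center k L)
    (h1 : finrank k (derivedIdeal k L) = 1) {z w : L} (hw : ⁅z, w⁆ ≠ 0)
    (hC : ∀ x y : L, ⁅z, x⁆ = 0 → ⁅z, y⁆ = 0 → ⁅x, y⁆ = 0) :
    LinearMap.ker (LieAlgebra.ad k L z) ≤ (k ∙ z) ⊔ (derivedIdeal k L).toSubmodule := by
  have hspan := derivedIdeal_eq_span_lie h1 hw
  have lie_mem_span (a b : L) : ∃ c : k, c • ⁅z, w⁆ = ⁅a, b⁆ := by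
    rw [← Submodule.mem_span_singleton, ← hspan]
    exact LieSubmodule.lie_mem_lie (LieSubmodule.mem_top a) (LieSubmodule.mem_top b)
  intro x (hx : ⁅z, x⁆ = 0)
  obtain ⟨c, hcx⟩ := lie_mem_span x w
  have hxz : ⁅z, x - c • z⁆ = 0 := by rw [lie_sub, hx, lie_smul, lie_self, smul_zero, sub_self]
  have hcentral : x - c • z ∈ derivedIdeal k L := by
    refine (mem_derivedIdeal_iff_forall_lie_eq_zero hc).2 fun y => ?_
    obtain ⟨d, hdy⟩ := lie_mem_span z y
    have hy : ⁅z, y - d • w⁆ = 0 := by rw [lie_sub, lie_smul, hdy, sub_self]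
    calc ⁅x - c • z, y⁆ = ⁅x - c • z, y - d • w⁆ + d • ⁅x - c • z, w⁆ := by
          rw [lie_sub, lie_smul]; abel
      _ = 0 := by rw [hC _ _ hxz hy, sub_lie, smul_lie, ← hcx, sub_self, smul_zero, zero_add]
  rw [← add_sub_cancel (c • z) x]
  exact Submodule.add_mem_sup (Submodule.smul_mem _ _ (Submodule.mem_span_singleton_self z))
    hcentral

variable [FiniteDimensional k L]

lemma finrank_le_finrank_ker_ad_add_one (h1 : finrank k (derivedIdeal k L) = 1) (z : L) :
    finrank k L ≤ finrank k (LinearMap.ker (LieAlgebra.ad k L z)) + 1 := by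
  have hrange : LinearMap.range (LieAlgebra.ad k L z) ≤ (derivedIdeal k L).toSubmodule := by
    rintro _ ⟨y, rfl⟩
    exact LieSubmodule.lie_mem_lie (LieSubmodule.mem_top z) (LieSubmodule.mem_top y)
  have := Submodule.finrank_mono hrange
  have := LinearMap.finrank_range_add_finrank_ker (LieAlgebra.ad k L z)
  have h1' : finrank k (derivedIdeal k L).toSubmodule = 1 := h1
  omega

lemma exists_lie_ne_zero_commuting_with (hc : derivedIdeal k L = LieAlgebra.center k L)
    (h1 : finrank k (derivedIdeal k L) = 1) (h4 : 4 ≤ finrank k L) (z : L) :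
    ∃ x y : L, ⁅z, x⁆ = 0 ∧ ⁅z, y⁆ = 0 ∧ ⁅x, y⁆ ≠ 0 := by
  by_contra! hC
  obtain ⟨w, hw⟩ : ∃ w : L, ⁅z, w⁆ ≠ 0 := by
    by_contra! hz
    obtain ⟨a, b, hab⟩ := exists_lie_ne_zero h1
    exact hab (hC a b (hz a) (hz b))
  have hz : z ≠ 0 := by rintro rfl; exact hw (zero_lie w)
  have hker := Submodule.finrank_mono (ker_ad_le_span_sup_derivedIdeal hc h1 hw hC)
  have hsup := Submodule.finrank_add_le_finrank_add_finrank (k ∙ z) (derivedIdeal k L).toSubmodule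
  have h1' : finrank k (derivedIdeal k L).toSubmodule = 1 := h1
  have := finrank_le_finrank_ker_ad_add_one h1 z
  rw [finrank_span_singleton hz] at hsup
  omega

section

open FreeCentralExtension

variable (hc : derivedIdeal k L = LieAlgebra.center k L) (h1 : finrank k (derivedIdeal k L) = 1)
  (h4 : 4 ≤ finrank k L)

include hc h1 h4

lemma liftBracket_eq_zero_of_mem_derivedIdeal (y : L) {z : L} (hz : z ∈ derivedIdeal k L) :
    liftBracket k L y z = 0 := by
  obtain ⟨x, x', hx, hx', hxx'⟩ := exists_lie_ne_zero_commuting_with hc h1 h4 y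
  have hjac := liftBracket_jacobi (k := k) y x x'
  rw [← lie_skew x' y, hx', neg_zero, hx, map_zero, map_zero, add_zero, add_zero] at hjac
  have hz' : z ∈ k ∙ ⁅x, x'⁆ := by rw [← derivedIdeal_eq_span_lie h1 hxx']; exact hz
  obtain ⟨c, rfl⟩ := Submodule.mem_span_singleton.1 hz'
  rw [map_smul, hjac, smul_zero]

lemma liftBracket_eq_of_sub_mem_derivedIdeal {x x' y y' : L} (hx : x - x' ∈ derivedIdeal k L)
    (hy : y - y' ∈ derivedIdeal k L) : liftBracket k L x y = liftBracket k L x' y' := by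
  rw [← sub_eq_zero, ← sub_add_sub_cancel _ (liftBracket k L x' y), ← LinearMap.sub_apply,
    ← map_sub, ← map_sub, liftBracket_swap, liftBracket_eq_zero_of_mem_derivedIdeal hc h1 h4 _ hx,
    liftBracket_eq_zero_of_mem_derivedIdeal hc h1 h4 _ hy, neg_zero, add_zero]

lemma exists_comp_ιMulti_eq_liftBracket :
    ∃ φ : ⋀[k]^2 (L ⧸ (derivedIdeal k L).toSubmodule) →ₗ[k] FreeCentralExtension k L,
      ∀ x y, φ (exteriorPower.ιMulti k 2 ![Submodule.Quotient.mk x, Submodule.Quotient.mk y]) =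
        liftBracket k L x y := by
  obtain ⟨s, hs⟩ := LinearMap.exists_rightInverse_of_surjective
    (derivedIdeal k L).toSubmodule.mkQ (Submodule.range_mkQ _)
  have hsub (x : L) : x - s (Submodule.Quotient.mk x) ∈ derivedIdeal k L := by
    rw [← LieSubmodule.mem_toSubmodule, ← Submodule.Quotient.mk_eq_zero, Submodule.Quotient.mk_sub]
    exact sub_eq_zero.2 (LinearMap.congr_fun hs _).symm
  let B := (liftBracket k L).compl₁₂ s s
  refine ⟨exteriorPower.alternatingMapLinearEquiv
    (B.toAlternatingMapFinTwo fun w => liftBracket_self (s w)), fun x y => ?_⟩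
  rw [exteriorPower.alternatingMapLinearEquiv_apply_ιMulti]
  exact (liftBracket_eq_of_sub_mem_derivedIdeal hc h1 h4 (hsub x) (hsub y)).symm

lemma nonempty_derivedImage_equiv_exteriorPower :
    Nonempty (derivedImage k L ≃ₗ[k] ⋀[k]^2 (L ⧸ (derivedIdeal k L).toSubmodule)) := by
  obtain ⟨φ, hφ⟩ := exists_comp_ιMulti_eq_liftBracket hc h1 h4
  exact ⟨((LinearEquiv.ofInjective φ (injective_of_comp_ιMulti_eq_liftBracket hφ)).trans
    (LinearEquiv.ofEq _ _ (range_eq_derivedImage_of_comp_ιMulti_eq_liftBracket hφ))).symm⟩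

end

end HeisenbergType

theorem stmt4 (k : Type*) [Field k] (H : Type*) [LieRing H] [LieAlgebra k H]
    [FiniteDimensional k H] (m : ℕ) (hm : 2 ≤ m) (hHdim : finrank k H = 2 * m + 1)
    (hHc : derivedIdeal k H = LieAlgebra.center k H)
    (hH1 : finrank k ↥(derivedIdeal k H) = 1) :
    schurMultDim k H = 2 * m ^ 2 - m - 1 := by
  obtain ⟨e⟩ := nonempty_derivedImage_equiv_exteriorPower hHc hH1 (by omega)
  have : FiniteDimensional k (FreeCentralExtension.derivedImage k H) := e.symm.finiteDimensional
  have hquot : finrank k (H ⧸ (derivedIdeal k H).toSubmodule) = 2 * m := by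
    have := (derivedIdeal k H).toSubmodule.finrank_quotient_add_finrank
    rw [hHdim] at this
    change _ + finrank k (derivedIdeal k H) = _ at this
    omega
  have h := FreeCentralExtension.finrank_schurMultiplier_add_finrank_derivedIdeal (k := k) (L := H)
  rw [e.finrank_eq, exteriorPower.finrank_eq, hquot, hH1, Nat.choose_two_right, mul_assoc,
    Nat.mul_div_cancel_left _ two_pos, Nat.mul_sub_one, ← mul_assoc, mul_comm m 2, mul_assoc,
    ← sq] at h
  rw [schurMultDim]
  omega
end

section
/- Let L be a finite-dimensional nilpotent Lie algebra with dim L² = 1. Let H/L² be a vector-space complement of Z(L)/L² in L/L², viewing H as a subalgebra of L containing L². Then H is a Heisenberg algebra, i.e., H² = Z(H) = L² has dimension 1. -/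
open Module

/-!
Since `H + Z(L) = L`, every element of `L` is an element of `H` up to a central summand, and
central summands do not change brackets. Hence `[L, L] = [H, H]` inside `L`, and an element of
`H` is central in `H` exactly when it is central in `L`. The hypothesis `H ∩ Z(L) = L²` then
identifies `Z(H)` with `L² = H²`.
-/

namespace LieAlgebra

variable {k L : Type*} [CommRing k] [LieRing L] [LieAlgebra k L]

lemma lie_add_mem_center {c c' : L} (hc : c ∈ center k L) (hc' : c' ∈ center k L) (x y : L) :
    ⁅x + c, y + c'⁆ = ⁅x, y⁆ := by
  rw [LieModule.mem_maxTrivSubmodule] at hc hc'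
  rw [add_lie, lie_add, lie_add, hc', ← lie_skew c, ← lie_skew c, hc, hc]
  simp

end LieAlgebra

namespace LieSubalgebra

section CommRing

variable {k L : Type*} [CommRing k] [LieRing L] [LieAlgebra k L] {H : LieSubalgebra k L}

lemma exists_add_mem_center_of_sup_center_eq_top
    (hsup : H.toSubmodule ⊔ (LieAlgebra.center k L).toSubmodule = ⊤) (a : L) :
    ∃ h ∈ H, ∃ c ∈ LieAlgebra.center k L, h + c = a :=
  Submodule.mem_sup.mp (hsup ▸ Submodule.mem_top)

lemma mem_center_iff_coe_mem_center
    (hsup : H.toSubmodule ⊔ (LieAlgebra.center k L).toSubmodule = ⊤) (z : H) :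
    z ∈ LieAlgebra.center k H ↔ (z : L) ∈ LieAlgebra.center k L := by
  simp only [LieModule.mem_maxTrivSubmodule]
  refine ⟨fun hz a => ?_, fun hz x => Subtype.ext (hz x)⟩
  obtain ⟨h, hh, c, hc, rfl⟩ := exists_add_mem_center_of_sup_center_eq_top hsup a
  have hcz := LieAlgebra.lie_add_mem_center hc (LieAlgebra.center k L).zero_mem h z
  rw [add_zero] at hcz
  rw [hcz]
  exact congrArg Subtype.val (hz ⟨h, hh⟩)

end CommRing

section Field

variable {k L : Type*} [Field k] [LieRing L] [LieAlgebra k L] {H : LieSubalgebra k L}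

lemma map_derivedIdeal_eq_derivedIdeal
    (hsup : H.toSubmodule ⊔ (LieAlgebra.center k L).toSubmodule = ⊤) :
    (derivedIdeal k H).toSubmodule.map H.toSubmodule.subtype = (derivedIdeal k L).toSubmodule := by
  unfold derivedIdeal
  rw [LieSubmodule.lieIdeal_oper_eq_linear_span', LieSubmodule.lieIdeal_oper_eq_linear_span',
    Submodule.map_span]
  refine le_antisymm (Submodule.span_mono ?_) (Submodule.span_le.mpr ?_)
  · rintro _ ⟨_, ⟨x, -, y, -, rfl⟩, rfl⟩
    exact ⟨x, trivial, y, trivial, rfl⟩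
  · rintro _ ⟨a, -, b, -, rfl⟩
    obtain ⟨h, hh, c, hc, rfl⟩ := exists_add_mem_center_of_sup_center_eq_top hsup a
    obtain ⟨h', hh', c', hc', rfl⟩ := exists_add_mem_center_of_sup_center_eq_top hsup b
    rw [LieAlgebra.lie_add_mem_center hc hc']
    exact Submodule.subset_span ⟨⁅(⟨h, hh⟩ : H), ⟨h', hh'⟩⁆,
      ⟨⟨h, hh⟩, trivial, ⟨h', hh'⟩, trivial, rfl⟩, rfl⟩

lemma mem_derivedIdeal_iff_coe_mem_derivedIdeal
    (hsup : H.toSubmodule ⊔ (LieAlgebra.center k L).toSubmodule = ⊤) (z : H) :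
    z ∈ derivedIdeal k H ↔ (z : L) ∈ derivedIdeal k L := by
  rw [← LieSubmodule.mem_toSubmodule (derivedIdeal k L), ← map_derivedIdeal_eq_derivedIdeal hsup]
  exact ⟨fun hz => ⟨z, hz, rfl⟩, fun ⟨w, hw, hwz⟩ => Subtype.ext hwz ▸ hw⟩

end Field

end LieSubalgebra

open LieSubalgebra in
theorem stmt14_general (k : Type*) [Field k] (L : Type*) [LieRing L] [LieAlgebra k L]
    (hm : finrank k ↥(derivedIdeal k L) = 1)
    (H : LieSubalgebra k L)
    (hinf : H.toSubmodule ⊓ (LieAlgebra.center k L).toSubmodule =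
      (derivedIdeal k L).toSubmodule)
    (hsup : H.toSubmodule ⊔ (LieAlgebra.center k L).toSubmodule = ⊤) :
    derivedIdeal k ↥H = LieAlgebra.center k ↥H ∧
    (LieSubmodule.toSubmodule (derivedIdeal k ↥H)).map H.toSubmodule.subtype =
      (derivedIdeal k L).toSubmodule ∧
    finrank k ↥(derivedIdeal k ↥H) = 1 := by
  have hmap := map_derivedIdeal_eq_derivedIdeal hsup
  refine ⟨?_, hmap, ?_⟩
  · ext z
    rw [mem_derivedIdeal_iff_coe_mem_derivedIdeal hsup, mem_center_iff_coe_mem_center hsup,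
      ← LieSubmodule.mem_toSubmodule, ← hinf]
    exact ⟨And.right, fun hz => ⟨z.2, hz⟩⟩
  · have hrank := Submodule.finrank_map_subtype_eq H.toSubmodule (derivedIdeal k H).toSubmodule
    rw [hmap] at hrank
    exact hrank.symm.trans hm

theorem stmt14 (k : Type*) [Field k] (L : Type*) [LieRing L] [LieAlgebra k L]
    [FiniteDimensional k L] [LieRing.IsNilpotent L]
    (hm : finrank k ↥(derivedIdeal k L) = 1)
    (H : LieSubalgebra k L)
    (hL2H : (derivedIdeal k L).toSubmodule ≤ H.toSubmodule)
    (hinf : H.toSubmodule ⊓ (LieAlgebra.center k L).toSubmodule =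
      (derivedIdeal k L).toSubmodule)
    (hsup : H.toSubmodule ⊔ (LieAlgebra.center k L).toSubmodule = ⊤) :
    derivedIdeal k ↥H = LieAlgebra.center k ↥H ∧
    (LieSubmodule.toSubmodule (derivedIdeal k ↥H)).map H.toSubmodule.subtype =
      (derivedIdeal k L).toSubmodule ∧
    finrank k ↥(derivedIdeal k ↥H) = 1 :=
  stmt14_general k L hm H hinf hsup
end
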